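/- arXiv:1609.06379 — 3 statements merged into one kernel-verified Lean document; each statement's English description precedes it below -/
import Mathlib

section
/- Let ψ and φ be clean μ-calculus formulas, X a fixpoint variable not bound in ψ, t1 an unfolding tree for ψ, and t2 an unfolding tree for φ, with BV(ψ) ∩ FV(φ) = ∅. Then the unfolding commutes with substitution: (ψ[X↦φ])(t1[X↦t2]) = (ψ(t1))[X↦φ(t2)], where t1[X↦t2] is the unfolding tree for ψ[X↦φ] obtained by replacing every node of t1 that represents a free occurrence of X in ψ with t2. -/
set_option linter.unusedVariables false

/-! # Syntax of the modal μ-calculus -/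

inductive Formula (P A V : Type) : Type where
  | bot : Formula P A V
  | top : Formula P A V
  | prop : P → Formula P A V
  | nprop : P → Formula P A V
  | var : V → Formula P A V
  | and : Formula P A V → Formula P A V → Formula P A V
  | or : Formula P A V → Formula P A V → Formula P A V
  | dia : A → Formula P A V → Formula P A V
  | box : A → Formula P A V → Formula P A V
  | mu : V → Formula P A V → Formula P A V
  | nu : V → Formula P A V → Formula P A V

namespace Formula

variable {P A V W : Type}

/-- Free variables. -/
def FV : Formula P A V → Set V
  | bot => ∅
  | top => ∅
  | prop _ => ∅
  | nprop _ => ∅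
  | var X => {X}
  | and a b => FV a ∪ FV b
  | or a b => FV a ∪ FV b
  | dia _ a => FV a
  | box _ a => FV a
  | mu X a => FV a \ {X}
  | nu X a => FV a \ {X}

/-- Bound variables. -/
def BV : Formula P A V → Set V
  | bot => ∅
  | top => ∅
  | prop _ => ∅
  | nprop _ => ∅
  | var _ => ∅
  | and a b => BV a ∪ BV b
  | or a b => BV a ∪ BV b
  | dia _ a => BV a
  | box _ a => BV a
  | mu X a => insert X (BV a)
  | nu X a => insert X (BV a)

def Closed (φ : Formula P A V) : Prop := FV φ = ∅

def FOpen (φ : Formula P A V) : Prop := FV φ ≠ ∅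

/-- Substitution of `χ` for the free occurrences of `X`. -/
def subst [DecidableEq V] : Formula P A V → V → Formula P A V → Formula P A V
  | bot, _, _ => bot
  | top, _, _ => top
  | prop p, _, _ => prop p
  | nprop p, _, _ => nprop p
  | var Y, X, χ => if Y = X then χ else var Y
  | and a b, X, χ => and (subst a X χ) (subst b X χ)
  | or a b, X, χ => or (subst a X χ) (subst b X χ)
  | dia c a, X, χ => dia c (subst a X χ)
  | box c a, X, χ => box c (subst a X χ)
  | mu Y a, X, χ => if Y = X then mu Y a else mu Y (subst a X χ)
  | nu Y a, X, χ => if Y = X then nu Y a else nu Y (subst a X χ)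

/-- The set of subformulas; `ψ ∈ subformulas φ` formalizes `ψ ≤ φ`. -/
def subformulas : Formula P A V → Set (Formula P A V)
  | and a b => insert (and a b) (subformulas a ∪ subformulas b)
  | or a b => insert (or a b) (subformulas a ∪ subformulas b)
  | dia c a => insert (dia c a) (subformulas a)
  | box c a => insert (box c a) (subformulas a)
  | mu X a => insert (mu X a) (subformulas a)
  | nu X a => insert (nu X a) (subformulas a)
  | φ => {φ}

/-- `OccursFree ψ φ`: ψ occurs as a subformula of φ not in the scope of any fixpoint operator. -/
def OccursFree (ψ : Formula P A V) : Formula P A V → Prop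
  | and a b => ψ = and a b ∨ OccursFree ψ a ∨ OccursFree ψ b
  | or a b => ψ = or a b ∨ OccursFree ψ a ∨ OccursFree ψ b
  | dia c a => ψ = dia c a ∨ OccursFree ψ a
  | box c a => ψ = box c a ∨ OccursFree ψ a
  | φ => ψ = φ

/-- `ltF ψ χ` formalizes `ψ <_f ηX.φ`: χ is a fixpoint literal ηX.φ, ψ ≤ φ,
ψ is open, and ψ occurs free in φ. -/
def ltF : Formula P A V → Formula P A V → Prop
  | ψ, mu _ φ => ψ ∈ subformulas φ ∧ FOpen ψ ∧ OccursFree ψ φ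
  | ψ, nu _ φ => ψ ∈ subformulas φ ∧ FOpen ψ ∧ OccursFree ψ φ
  | _, _ => False

/-- `Binds X χ`: χ is a fixpoint literal of the form ηX.ψ. -/
def Binds (X : V) : Formula P A V → Prop
  | mu Y _ => Y = X
  | nu Y _ => Y = X
  | _ => False

/-- Sequential application of a substitution `[X₁↦χ₁];…;[Xₙ↦χₙ]`, given as a list, to a formula. -/
def applySubstList [DecidableEq V] : Formula P A V → List (V × Formula P A V) → Formula P A V
  | φ, [] => φ
  | φ, (X, χ) :: σ => applySubstList (subst φ X χ) σ

/-- `SeqUnfolds σ θ`: the substitution σ = [X₁↦χ₁];…;[Xₙ↦χₙ] sequentially unfolds θ = χₙ,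
i.e. each χᵢ is a fixpoint literal binding Xᵢ, and χᵢ <_f χᵢ₊₁ for all 1 ≤ i < n. -/
inductive SeqUnfolds : List (V × Formula P A V) → Formula P A V → Prop where
  | single (X : V) (χ : Formula P A V) : Binds X χ → SeqUnfolds [(X, χ)] χ
  | cons (X : V) (χ : Formula P A V) (X' : V) (χ' : Formula P A V)
      (σ : List (V × Formula P A V)) (θ : Formula P A V) :
      Binds X χ → ltF χ χ' → SeqUnfolds ((X', χ') :: σ) θ →
      SeqUnfolds ((X, χ) :: (X', χ') :: σ) θ

/-- A formula χ is irreducible if for every substitution [X₁↦χ₁];…;[Xₙ↦χₙ] that sequentially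
unfolds χₙ, χ = χ₁([X₂↦χ₂];…;[Xₙ↦χₙ]) implies n = 1. -/
def Irreducible [DecidableEq V] (χ : Formula P A V) : Prop :=
  ∀ (X₁ : V) (χ₁ : Formula P A V) (σ : List (V × Formula P A V)) (θ : Formula P A V),
    SeqUnfolds ((X₁, χ₁) :: σ) θ → χ = applySubstList χ₁ σ → σ = []

/-- An eventuality is an irreducible closed least fixpoint literal. -/
def Eventuality [DecidableEq V] (θ : Formula P A V) : Prop :=
  Irreducible θ ∧ Closed θ ∧ ∃ X ψ, θ = mu X ψ

/-- `IsDeferral ψ θ`: ψ belongs to the eventuality θ, i.e. ψ = ασ for some substitution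
σ = [X₁↦θ₁];…;[Xₙ↦θₙ] that sequentially unfolds θ = θₙ and some α <_f θ₁. -/
def IsDeferral [DecidableEq V] (ψ θ : Formula P A V) : Prop :=
  ∃ (X₁ : V) (θ₁ : Formula P A V) (σ : List (V × Formula P A V)) (α : Formula P A V),
    SeqUnfolds ((X₁, θ₁) :: σ) θ ∧ ltF α θ₁ ∧ ψ = applySubstList α ((X₁, θ₁) :: σ)

/-- Finite iterates: ψ⁰_Z = ⊥ and ψ^{m+1}_Z = ψ[Z↦ψ^m_Z]. -/
def iterF [DecidableEq V] (ψ : Formula P A V) (Z : V) : Nat → Formula P A V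
  | 0 => bot
  | m + 1 => subst ψ Z (iterF ψ Z m)

/-- The list of all binder occurrences in a formula. -/
def binderList : Formula P A V → List V
  | and a b => binderList a ++ binderList b
  | or a b => binderList a ++ binderList b
  | dia _ a => binderList a
  | box _ a => binderList a
  | mu X a => X :: binderList a
  | nu X a => X :: binderList a
  | _ => []

/-- A formula is clean if all its bound fixpoint variables are distinct and
disjoint from its free variables. -/
def Clean (φ : Formula P A V) : Prop :=
  (binderList φ).Nodup ∧ ∀ X ∈ binderList φ, X ∉ FV φ

/-- `GuardedIn φ S`: every variable in S occurs in φ only under a modal operator,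
and every bound variable of φ is guarded by a modal operator within its binder's scope. -/
def GuardedIn : Formula P A V → Set V → Prop
  | bot, _ => True
  | top, _ => True
  | prop _, _ => True
  | nprop _, _ => True
  | var X, S => X ∉ S
  | and a b, S => GuardedIn a S ∧ GuardedIn b S
  | or a b, S => GuardedIn a S ∧ GuardedIn b S
  | dia _ a, _ => GuardedIn a ∅
  | box _ a, _ => GuardedIn a ∅
  | mu X a, S => GuardedIn a (insert X S)
  | nu X a, S => GuardedIn a (insert X S)

/-- A formula is guarded if at least one modal operator occurs between every occurrence
of a variable X and its binder ηX. -/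
def Guarded (φ : Formula P A V) : Prop := GuardedIn φ ∅

/-- A formula is irredundant if X ∈ FV(ψ) for all subformulas ηX.ψ. -/
def Irredundant (φ : Formula P A V) : Prop :=
  ∀ (X : V) (ψ : Formula P A V),
    (mu X ψ ∈ subformulas φ ∨ nu X ψ ∈ subformulas φ) → X ∈ FV ψ

/-- The μ-variables of a formula. -/
def muVarSet (φ : Formula P A V) : Set V := {X | ∃ ψ, mu X ψ ∈ subformulas φ}

/-- The ν-variables of a formula. -/
def nuVarSet (φ : Formula P A V) : Set V := {X | ∃ ψ, nu X ψ ∈ subformulas φ}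

/-- Alternation-freeness: no subformula contains both a free μ-variable and a free ν-variable. -/
def AlternationFree (φ : Formula P A V) : Prop :=
  ∀ ψ ∈ subformulas φ, ¬ ∃ X Y, X ∈ FV ψ ∧ Y ∈ FV ψ ∧ X ∈ muVarSet φ ∧ Y ∈ nuVarSet φ

/-- Simultaneous substitution (substituting only free occurrences of variables). -/
def applySubst [DecidableEq V] (σ : V → Formula P A V) : Formula P A V → Formula P A V
  | bot => bot
  | top => top
  | prop p => prop p
  | nprop p => nprop p
  | var X => σ X
  | and a b => and (applySubst σ a) (applySubst σ b)
  | or a b => or (applySubst σ a) (applySubst σ b)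
  | dia c a => dia c (applySubst σ a)
  | box c a => box c (applySubst σ a)
  | mu X a => mu X (applySubst (Function.update σ X (var X)) a)
  | nu X a => nu X (applySubst (Function.update σ X (var X)) a)

/-- The domain of a substitution: the variables that it touches. -/
def substDom (σ : V → Formula P A V) : Set V := {X | σ X ≠ var X}

/-- Size of a formula. -/
def fsize : Formula P A V → Nat
  | and a b => fsize a + fsize b + 1
  | or a b => fsize a + fsize b + 1
  | dia _ a => fsize a + 1
  | box _ a => fsize a + 1
  | mu _ a => fsize a + 1
  | nu _ a => fsize a + 1
  | _ => 1

end Formula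

/-! # Kripke semantics -/

/-- A Kripke structure: a family of relations indexed by actions, and a valuation. -/
structure Kripke (P A W : Type) where
  rel : A → W → W → Prop
  val : P → Set W

variable {P A V W : Type}

/-- The extension of a formula in a Kripke structure under an interpretation of the
fixpoint variables; least/greatest fixpoints are realized via Knaster–Tarski. -/
def Kripke.sem [DecidableEq V] (K : Kripke P A W) : Formula P A V → (V → Set W) → Set W
  | Formula.bot, _ => ∅
  | Formula.top, _ => Set.univ
  | Formula.prop p, _ => K.val p
  | Formula.nprop p, _ => (K.val p)ᶜ
  | Formula.var X, i => i X
  | Formula.and a b, i => K.sem a i ∩ K.sem b i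
  | Formula.or a b, i => K.sem a i ∪ K.sem b i
  | Formula.dia c a, i => {v | ∃ w, K.rel c v w ∧ w ∈ K.sem a i}
  | Formula.box c a, i => {v | ∀ w, K.rel c v w → w ∈ K.sem a i}
  | Formula.mu X a, i => sInf {G | K.sem a (Function.update i X G) ⊆ G}
  | Formula.nu X a, i => sSup {G | G ⊆ K.sem a (Function.update i X G)}

/-! # Unfolding trees and fixpoint-free contexts -/

/-- The shape of an unfolding tree: a syntax tree skeleton with a natural number label
at each least-fixpoint node. -/
inductive UTree : Type where
  | leaf : UTree
  | node1 : UTree → UTree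
  | node2 : UTree → UTree → UTree
  | munode : Nat → UTree → UTree
  | nunode : UTree → UTree

variable {P A V : Type}

/-- `IsTreeFor t φ`: t is an unfolding tree for φ, i.e. t is the syntax tree of φ together
with a natural number label at each least-fixpoint node. -/
inductive IsTreeFor : UTree → Formula P A V → Prop where
  | bot : IsTreeFor UTree.leaf Formula.bot
  | top : IsTreeFor UTree.leaf Formula.top
  | prop (p : P) : IsTreeFor UTree.leaf (Formula.prop p)
  | nprop (p : P) : IsTreeFor UTree.leaf (Formula.nprop p)
  | var (X : V) : IsTreeFor UTree.leaf (Formula.var X)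
  | and {t₁ t₂ : UTree} {a b : Formula P A V} :
      IsTreeFor t₁ a → IsTreeFor t₂ b → IsTreeFor (UTree.node2 t₁ t₂) (Formula.and a b)
  | or {t₁ t₂ : UTree} {a b : Formula P A V} :
      IsTreeFor t₁ a → IsTreeFor t₂ b → IsTreeFor (UTree.node2 t₁ t₂) (Formula.or a b)
  | dia {t : UTree} {c : A} {a : Formula P A V} :
      IsTreeFor t a → IsTreeFor (UTree.node1 t) (Formula.dia c a)
  | box {t : UTree} {c : A} {a : Formula P A V} :
      IsTreeFor t a → IsTreeFor (UTree.node1 t) (Formula.box c a)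
  | mu {t : UTree} {X : V} {a : Formula P A V} (n : Nat) :
      IsTreeFor t a → IsTreeFor (UTree.munode n t) (Formula.mu X a)
  | nu {t : UTree} {X : V} {a : Formula P A V} :
      IsTreeFor t a → IsTreeFor (UTree.nunode t) (Formula.nu X a)

/-- The unfolding φ(t) of a formula φ according to an unfolding tree t: each least fixpoint
literal μX.φ₁ with label n is replaced by the finite iterate (φ₁(t₁))ⁿ_X. -/
def unfoldT [DecidableEq V] : Formula P A V → UTree → Formula P A V
  | Formula.and a b, UTree.node2 t₁ t₂ => Formula.and (unfoldT a t₁) (unfoldT b t₂)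
  | Formula.or a b, UTree.node2 t₁ t₂ => Formula.or (unfoldT a t₁) (unfoldT b t₂)
  | Formula.dia c a, UTree.node1 t => Formula.dia c (unfoldT a t)
  | Formula.box c a, UTree.node1 t => Formula.box c (unfoldT a t)
  | Formula.mu X a, UTree.munode n t => Formula.iterF (unfoldT a t) X n
  | Formula.nu X a, UTree.nunode t => Formula.nu X (unfoldT a t)
  | φ, _ => φ

/-- `treeSubst ψ X t₁ t₂`: the unfolding tree `t₁[X↦t₂]` for ψ[X↦φ], obtained by replacing
every node of t₁ that represents a free occurrence of X in ψ with t₂. -/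
def treeSubst [DecidableEq V] : Formula P A V → V → UTree → UTree → UTree
  | Formula.var Y, X, t₁, t₂ => if Y = X then t₂ else t₁
  | Formula.and a b, X, UTree.node2 s₁ s₂, t₂ =>
      UTree.node2 (treeSubst a X s₁ t₂) (treeSubst b X s₂ t₂)
  | Formula.or a b, X, UTree.node2 s₁ s₂, t₂ =>
      UTree.node2 (treeSubst a X s₁ t₂) (treeSubst b X s₂ t₂)
  | Formula.dia _ a, X, UTree.node1 s, t₂ => UTree.node1 (treeSubst a X s t₂)
  | Formula.box _ a, X, UTree.node1 s, t₂ => UTree.node1 (treeSubst a X s t₂)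
  | Formula.mu Y a, X, UTree.munode n s, t₂ =>
      if Y = X then UTree.munode n s else UTree.munode n (treeSubst a X s t₂)
  | Formula.nu Y a, X, UTree.nunode s, t₂ =>
      if Y = X then UTree.nunode s else UTree.nunode (treeSubst a X s t₂)
  | _, _, t₁, _ => t₁

/-- Fixpoint-free contexts with a single hole. -/
inductive Ctx (P A V : Type) : Type where
  | hole : Ctx P A V
  | andL : Ctx P A V → Formula P A V → Ctx P A V
  | andR : Formula P A V → Ctx P A V → Ctx P A V
  | orL : Ctx P A V → Formula P A V → Ctx P A V
  | orR : Formula P A V → Ctx P A V → Ctx P A V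
  | dia : A → Ctx P A V → Ctx P A V
  | box : A → Ctx P A V → Ctx P A V

/-- Filling the hole of a context with a formula. -/
def Ctx.fill : Ctx P A V → Formula P A V → Formula P A V
  | Ctx.hole, φ => φ
  | Ctx.andL c ψ, φ => Formula.and (Ctx.fill c φ) ψ
  | Ctx.andR ψ c, φ => Formula.and ψ (Ctx.fill c φ)
  | Ctx.orL c ψ, φ => Formula.or (Ctx.fill c φ) ψ
  | Ctx.orR ψ c, φ => Formula.or ψ (Ctx.fill c φ)
  | Ctx.dia a c, φ => Formula.dia a (Ctx.fill c φ)
  | Ctx.box a c, φ => Formula.box a (Ctx.fill c φ)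

namespace Formula

variable [DecidableEq V]

theorem subst_fresh {θ : Formula P A V} {X : V} (h : X ∉ FV θ) (w : Formula P A V) :
    subst θ X w = θ := by
  induction θ with
  | bot => rfl
  | top => rfl
  | prop p => rfl
  | nprop p => rfl
  | var Y =>
    simp only [FV, Set.mem_singleton_iff] at h
    have hne : Y ≠ X := fun hh => h hh.symm
    simp [subst, hne]
  | and a b iha ihb =>
    simp only [FV, Set.mem_union, not_or] at h
    simp [subst, iha h.1, ihb h.2]
  | or a b iha ihb =>
    simp only [FV, Set.mem_union, not_or] at h
    simp [subst, iha h.1, ihb h.2]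
  | dia c a ih => simp [subst, ih h]
  | box c a ih => simp [subst, ih h]
  | mu Y a ih =>
    by_cases hYX : Y = X
    · simp [subst, hYX]
    · simp only [FV, Set.mem_diff, Set.mem_singleton_iff, not_and, not_not] at h
      have hXa : X ∉ FV a := fun hx => hYX ((h hx).symm)
      simp [subst, hYX, ih hXa]
  | nu Y a ih =>
    by_cases hYX : Y = X
    · simp [subst, hYX]
    · simp only [FV, Set.mem_diff, Set.mem_singleton_iff, not_and, not_not] at h
      have hXa : X ∉ FV a := fun hx => hYX ((h hx).symm)
      simp [subst, hYX, ih hXa]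

theorem subst_comm {χ w θ : Formula P A V} {X Y : V} (hXY : X ≠ Y) (hY : Y ∉ FV θ)
    (hX : X ∉ BV χ) :
    subst (subst χ Y w) X θ = subst (subst χ X θ) Y (subst w X θ) := by
  induction χ with
  | bot => rfl
  | top => rfl
  | prop p => rfl
  | nprop p => rfl
  | var Z =>
    by_cases hZY : Z = Y
    · subst hZY
      simp [subst, hXY, Ne.symm hXY]
    · by_cases hZX : Z = X
      · subst hZX
        simp [subst, hZY, subst_fresh hY]
      · simp [subst, hZY, hZX]
  | and a b iha ihb =>
    simp only [BV, Set.mem_union, not_or] at hX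
    simp [subst, iha hX.1, ihb hX.2]
  | or a b iha ihb =>
    simp only [BV, Set.mem_union, not_or] at hX
    simp [subst, iha hX.1, ihb hX.2]
  | dia c a ih =>
    simp only [BV] at hX
    simp [subst, ih hX]
  | box c a ih =>
    simp only [BV] at hX
    simp [subst, ih hX]
  | mu Z a ih =>
    simp only [BV, Set.mem_insert_iff, not_or] at hX
    have hZX : Z ≠ X := fun h => hX.1 h.symm
    by_cases hZY : Z = Y
    · subst hZY
      simp [subst, hZX]
    · simp [subst, hZY, hZX, ih hX.2]
  | nu Z a ih =>
    simp only [BV, Set.mem_insert_iff, not_or] at hX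
    have hZX : Z ≠ X := fun h => hX.1 h.symm
    by_cases hZY : Z = Y
    · subst hZY
      simp [subst, hZX]
    · simp [subst, hZY, hZX, ih hX.2]

theorem subst_iterF {χ θ : Formula P A V} {X Y : V} (hXY : X ≠ Y) (hY : Y ∉ FV θ)
    (hX : X ∉ BV χ) (n : Nat) :
    subst (iterF χ Y n) X θ = iterF (subst χ X θ) Y n := by
  induction n with
  | zero => rfl
  | succ m ih =>
    show subst (subst χ Y (iterF χ Y m)) X θ = subst (subst χ X θ) Y (iterF (subst χ X θ) Y m)
    rw [subst_comm hXY hY hX, ih]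

theorem FV_subst_subset (χ w : Formula P A V) (X : V) :
    FV (subst χ X w) ⊆ (FV χ \ {X}) ∪ FV w := by
  induction χ with
  | bot => simp [subst, FV]
  | top => simp [subst, FV]
  | prop p => simp [subst, FV]
  | nprop p => simp [subst, FV]
  | var Y =>
    by_cases hYX : Y = X
    · simp [subst, hYX]
    · simp only [subst, if_neg hYX, FV]
      intro x hx
      rw [Set.mem_singleton_iff] at hx
      subst hx
      exact Or.inl ⟨rfl, fun h => hYX (Set.mem_singleton_iff.mp h)⟩
  | and a b iha ihb =>
    simp only [subst, FV]
    intro x hx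
    rcases hx with hx | hx
    · rcases iha hx with h | h
      · exact Or.inl ⟨Or.inl h.1, h.2⟩
      · exact Or.inr h
    · rcases ihb hx with h | h
      · exact Or.inl ⟨Or.inr h.1, h.2⟩
      · exact Or.inr h
  | or a b iha ihb =>
    simp only [subst, FV]
    intro x hx
    rcases hx with hx | hx
    · rcases iha hx with h | h
      · exact Or.inl ⟨Or.inl h.1, h.2⟩
      · exact Or.inr h
    · rcases ihb hx with h | h
      · exact Or.inl ⟨Or.inr h.1, h.2⟩
      · exact Or.inr h
  | dia c a ih => simpa [subst, FV] using ih
  | box c a ih => simpa [subst, FV] using ih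
  | mu Y a ih =>
    by_cases hYX : Y = X
    · subst hYX
      simp only [subst, if_pos rfl, FV]
      intro x hx
      exact Or.inl ⟨hx, hx.2⟩
    · simp only [subst, if_neg hYX, FV]
      intro x hx
      rcases ih hx.1 with h | h
      · exact Or.inl ⟨⟨h.1, hx.2⟩, h.2⟩
      · exact Or.inr h
  | nu Y a ih =>
    by_cases hYX : Y = X
    · subst hYX
      simp only [subst, if_pos rfl, FV]
      intro x hx
      exact Or.inl ⟨hx, hx.2⟩
    · simp only [subst, if_neg hYX, FV]
      intro x hx
      rcases ih hx.1 with h | h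
      · exact Or.inl ⟨⟨h.1, hx.2⟩, h.2⟩
      · exact Or.inr h

theorem FV_iterF_subset (χ : Formula P A V) (X : V) (n : Nat) :
    FV (iterF χ X n) ⊆ FV χ \ {X} := by
  induction n with
  | zero => simp [iterF, FV]
  | succ m ih =>
    show FV (subst χ X (iterF χ X m)) ⊆ _
    intro x hx
    rcases FV_subst_subset χ (iterF χ X m) X hx with h | h
    · exact h
    · exact ih h

theorem BV_subst_subset (χ w : Formula P A V) (X : V) :
    BV (subst χ X w) ⊆ BV χ ∪ BV w := by
  induction χ with
  | bot => simp [subst, BV]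
  | top => simp [subst, BV]
  | prop p => simp [subst, BV]
  | nprop p => simp [subst, BV]
  | var Y =>
    by_cases hYX : Y = X
    · simp [subst, hYX, BV]
    · simp [subst, hYX, BV]
  | and a b iha ihb =>
    simp only [subst, BV]
    intro x hx
    rcases hx with hx | hx
    · rcases iha hx with h | h
      · exact Or.inl (Or.inl h)
      · exact Or.inr h
    · rcases ihb hx with h | h
      · exact Or.inl (Or.inr h)
      · exact Or.inr h
  | or a b iha ihb =>
    simp only [subst, BV]
    intro x hx
    rcases hx with hx | hx
    · rcases iha hx with h | h
      · exact Or.inl (Or.inl h)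
      · exact Or.inr h
    · rcases ihb hx with h | h
      · exact Or.inl (Or.inr h)
      · exact Or.inr h
  | dia c a ih => simpa [subst, BV] using ih
  | box c a ih => simpa [subst, BV] using ih
  | mu Y a ih =>
    by_cases hYX : Y = X
    · subst hYX
      simp only [subst, if_pos rfl]
      exact Set.subset_union_left
    · simp only [subst, if_neg hYX, BV]
      intro x hx
      rcases hx with hx | hx
      · exact Or.inl (Or.inl hx)
      · rcases ih hx with h | h
        · exact Or.inl (Or.inr h)
        · exact Or.inr h
  | nu Y a ih =>
    by_cases hYX : Y = X
    · subst hYX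
      simp only [subst, if_pos rfl]
      exact Set.subset_union_left
    · simp only [subst, if_neg hYX, BV]
      intro x hx
      rcases hx with hx | hx
      · exact Or.inl (Or.inl hx)
      · rcases ih hx with h | h
        · exact Or.inl (Or.inr h)
        · exact Or.inr h

theorem BV_iterF_subset (χ : Formula P A V) (X : V) (n : Nat) :
    BV (iterF χ X n) ⊆ BV χ := by
  induction n with
  | zero => simp [iterF, BV]
  | succ m ih =>
    show BV (subst χ X (iterF χ X m)) ⊆ _
    intro x hx
    rcases BV_subst_subset χ (iterF χ X m) X hx with h | h
    · exact h
    · exact ih h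

end Formula

theorem FV_unfoldT_subset [DecidableEq V] {t : UTree} {φ : Formula P A V}
    (h : IsTreeFor t φ) : Formula.FV (unfoldT φ t) ⊆ Formula.FV φ := by
  induction h with
  | bot => exact Set.Subset.rfl
  | top => exact Set.Subset.rfl
  | prop p => exact Set.Subset.rfl
  | nprop p => exact Set.Subset.rfl
  | var X => exact Set.Subset.rfl
  | and h1 h2 ih1 ih2 =>
    simp only [unfoldT, Formula.FV]
    exact Set.union_subset_union ih1 ih2
  | or h1 h2 ih1 ih2 =>
    simp only [unfoldT, Formula.FV]
    exact Set.union_subset_union ih1 ih2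
  | dia h ih => simpa [unfoldT, Formula.FV] using ih
  | box h ih => simpa [unfoldT, Formula.FV] using ih
  | @mu t X a n h ih =>
    simp only [unfoldT, Formula.FV]
    intro x hx
    have := Formula.FV_iterF_subset (unfoldT a t) X n hx
    exact ⟨ih this.1, this.2⟩
  | @nu t X a h ih =>
    simp only [unfoldT, Formula.FV]
    intro x hx
    exact ⟨ih hx.1, hx.2⟩

theorem BV_unfoldT_subset [DecidableEq V] {t : UTree} {φ : Formula P A V}
    (h : IsTreeFor t φ) : Formula.BV (unfoldT φ t) ⊆ Formula.BV φ := by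
  induction h with
  | bot => exact Set.Subset.rfl
  | top => exact Set.Subset.rfl
  | prop p => exact Set.Subset.rfl
  | nprop p => exact Set.Subset.rfl
  | var X => exact Set.Subset.rfl
  | and h1 h2 ih1 ih2 =>
    simp only [unfoldT, Formula.BV]
    exact Set.union_subset_union ih1 ih2
  | or h1 h2 ih1 ih2 =>
    simp only [unfoldT, Formula.BV]
    exact Set.union_subset_union ih1 ih2
  | dia h ih => simpa [unfoldT, Formula.BV] using ih
  | box h ih => simpa [unfoldT, Formula.BV] using ih
  | @mu t X a n h ih =>
    simp only [unfoldT, Formula.BV]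
    intro x hx
    exact Set.mem_insert_iff.mpr (Or.inr (ih (Formula.BV_iterF_subset (unfoldT a t) X n hx)))
  | @nu t X a h ih =>
    simp only [unfoldT, Formula.BV]
    intro x hx
    rcases hx with hx | hx
    · exact Or.inl hx
    · exact Or.inr (ih hx)

theorem unfold_subst_aux [DecidableEq V] (φ : Formula P A V) (X : V) (t₂ : UTree)
    (h₂ : IsTreeFor t₂ φ) :
    ∀ {t₁ : UTree} {ψ : Formula P A V}, IsTreeFor t₁ ψ → X ∉ Formula.BV ψ →
      (∀ Y ∈ Formula.BV ψ, Y ∉ Formula.FV φ) →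
      unfoldT (Formula.subst ψ X φ) (treeSubst ψ X t₁ t₂)
        = Formula.subst (unfoldT ψ t₁) X (unfoldT φ t₂) := by
  intro t₁ ψ h₁
  induction h₁ with
  | bot => intro _ _; rfl
  | top => intro _ _; rfl
  | prop p => intro _ _; rfl
  | nprop p => intro _ _; rfl
  | var Y =>
    intro _ _
    by_cases hYX : Y = X
    · simp [Formula.subst, treeSubst, unfoldT, hYX]
    · simp [Formula.subst, treeSubst, unfoldT, hYX]
  | @and s₁ s₂ a b ha hb iha ihb =>
    intro hX hBV
    simp only [Formula.BV, Set.mem_union, not_or] at hX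
    simp only [Formula.subst, treeSubst, unfoldT,
      iha hX.1 (fun Y hY => hBV Y (Or.inl hY)), ihb hX.2 (fun Y hY => hBV Y (Or.inr hY))]
  | @or s₁ s₂ a b ha hb iha ihb =>
    intro hX hBV
    simp only [Formula.BV, Set.mem_union, not_or] at hX
    simp only [Formula.subst, treeSubst, unfoldT,
      iha hX.1 (fun Y hY => hBV Y (Or.inl hY)), ihb hX.2 (fun Y hY => hBV Y (Or.inr hY))]
  | @dia s c a ha ih =>
    intro hX hBV
    simp only [Formula.subst, treeSubst, unfoldT, ih hX hBV]
  | @box s c a ha ih =>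
    intro hX hBV
    simp only [Formula.subst, treeSubst, unfoldT, ih hX hBV]
  | @mu s Y a n ha ih =>
    intro hX hBV
    simp only [Formula.BV, Set.mem_insert_iff, not_or] at hX
    have hYX : Y ≠ X := fun h => hX.1 h.symm
    have hXa : X ∉ Formula.BV a := hX.2
    simp only [Formula.subst, if_neg hYX, treeSubst, if_neg hYX, unfoldT]
    rw [ih hXa (fun Z hZ => hBV Z (Or.inr hZ))]
    have hYφ : Y ∉ Formula.FV φ := hBV Y (Or.inl rfl)
    have hYu : Y ∉ Formula.FV (unfoldT φ t₂) := fun h => hYφ (FV_unfoldT_subset h₂ h)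
    have hXu : X ∉ Formula.BV (unfoldT a s) := fun h => hXa (BV_unfoldT_subset ha h)
    rw [Formula.subst_iterF (Ne.symm hYX) hYu hXu n]
  | @nu s Y a ha ih =>
    intro hX hBV
    simp only [Formula.BV, Set.mem_insert_iff, not_or] at hX
    have hYX : Y ≠ X := fun h => hX.1 h.symm
    simp only [Formula.subst, if_neg hYX, treeSubst, if_neg hYX, unfoldT]
    rw [ih hX.2 (fun Z hZ => hBV Z (Or.inr hZ))]

/-- Unfolding commutes with substitution:
(ψ[X↦φ])(t₁[X↦t₂]) = (ψ(t₁))[X↦φ(t₂)]. -/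
theorem unfolding_commutes_with_substitution {P A V : Type} [DecidableEq V]
    (ψ φ : Formula P A V) (X : V)
    (hψ : Formula.Clean ψ) (hφ : Formula.Clean φ)
    (hX : X ∉ Formula.BV ψ) (hBV : Formula.BV ψ ∩ Formula.FV φ = ∅)
    (t₁ t₂ : UTree) (h₁ : IsTreeFor t₁ ψ) (h₂ : IsTreeFor t₂ φ) :
    unfoldT (Formula.subst ψ X φ) (treeSubst ψ X t₁ t₂)
      = Formula.subst (unfoldT ψ t₁) X (unfoldT φ t₂) := by
  refine unfold_subst_aux φ X t₂ h₂ h₁ hX ?_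
  intro Y hY hYφ
  have : Y ∈ Formula.BV ψ ∩ Formula.FV φ := ⟨hY, hYφ⟩
  rw [hBV] at this
  exact this
end

section
/- If G is a fully expanded set of nodes, then the successful and unsuccessful focused nodes are complementary: E_G = 𝐂_G ∖ A_G. -/
set_option linter.unusedVariables false

variable {P A V W : Type}

/-! # Tableau nodes, rules, deferral tracking, and the proof transitionals -/

/-- Focused nodes: pairs (Γ, d) of a node (a set of formulas) and a focus (a set of formulas). -/
abbrev FNode (P A V : Type) : Type := Set (Formula P A V) × Set (Formula P A V)

variable {P A V : Type}

open Formula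

/-- Formulas allowed in state nodes: ⊤, propositional literals and modal literals. -/
def IsStateFormula : Formula P A V → Prop
  | Formula.top => True
  | Formula.prop _ => True
  | Formula.nprop _ => True
  | Formula.dia _ _ => True
  | Formula.box _ _ => True
  | _ => False

/-- A state node contains only ⊤, non-clashing propositional literals and modal literals. -/
def IsStateNode (Δ : Set (Formula P A V)) : Prop :=
  (∀ φ ∈ Δ, IsStateFormula φ) ∧
    ∀ p : P, ¬(Formula.prop p ∈ Δ ∧ Formula.nprop p ∈ Δ)

/-- Conclusions of the non-modal tableau rules (⊥), clash, (∧), (∨), (η) applied to Δ: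
a set of sets of conclusion nodes (one conclusion-set per matching rule). -/
def conclP [DecidableEq V] (Δ : Set (Formula P A V)) :
    Set (Set (Set (Formula P A V))) :=
  {S | (Formula.bot ∈ Δ ∧ S = ∅)
    ∨ (∃ p : P, Formula.prop p ∈ Δ ∧ Formula.nprop p ∈ Δ ∧ S = ∅)
    ∨ (∃ φ ψ : Formula P A V, Formula.and φ ψ ∈ Δ ∧
        S = {(Δ \ {Formula.and φ ψ}) ∪ {φ, ψ}})
    ∨ (∃ φ ψ : Formula P A V, Formula.or φ ψ ∈ Δ ∧
        S = {(Δ \ {Formula.or φ ψ}) ∪ {φ}, (Δ \ {Formula.or φ ψ}) ∪ {ψ}})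
    ∨ (∃ (X : V) (φ : Formula P A V), Formula.mu X φ ∈ Δ ∧
        S = {(Δ \ {Formula.mu X φ}) ∪ {Formula.subst φ X (Formula.mu X φ)}})
    ∨ (∃ (X : V) (φ : Formula P A V), Formula.nu X φ ∈ Δ ∧
        S = {(Δ \ {Formula.nu X φ}) ∪ {Formula.subst φ X (Formula.nu X φ)}})}

/-- Conclusions of the modal rules (⟨a⟩) applied to Δ. -/
def conclM (Δ : Set (Formula P A V)) : Set (Set (Set (Formula P A V))) :=
  {S | ∃ (a : A) (φ : Formula P A V), Formula.dia a φ ∈ Δ ∧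
        S = {{ψ | Formula.box a ψ ∈ Δ} ∪ {φ}}}

open Classical in
/-- `concl Δ`: conclusions of the modal rules if Δ is a state node,
of the non-modal rules otherwise. -/
noncomputable def concl [DecidableEq V] (Δ : Set (Formula P A V)) :
    Set (Set (Set (Formula P A V))) :=
  if IsStateNode Δ then conclM Δ else conclP Δ

/-- A set of nodes is fully expanded if it is closed under conclusions. -/
def FullyExpanded [DecidableEq V] (G : Set (Set (Formula P A V))) : Prop :=
  ∀ Γ ∈ G, ∀ S ∈ concl Γ, ∀ Δ ∈ S, Δ ∈ G

/-- `dset Γ`: the set of deferrals contained in the node Γ. -/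
def dset [DecidableEq V] (Γ : Set (Formula P A V)) : Set (Formula P A V) :=
  {δ ∈ Γ | ∃ θ, Formula.Eventuality θ ∧ Formula.IsDeferral δ θ}

/-- Propositional inheritance: φ is inherited from ψ by a non-modal rule step, i.e.
ψ has one of the forms φ, φ∨χ, χ∨φ, φ∧χ, χ∧φ, or ψ = ηX.χ and φ = χ[X↦ψ]. -/
def InheritsProp [DecidableEq V] (φ ψ : Formula P A V) : Prop :=
  ψ = φ
  ∨ (∃ χ, ψ = Formula.or φ χ ∨ ψ = Formula.or χ φ ∨ ψ = Formula.and φ χ ∨ ψ = Formula.and χ φ)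
  ∨ (∃ (X : V) (χ : Formula P A V), (ψ = Formula.mu X χ ∨ ψ = Formula.nu X χ) ∧
      φ = Formula.subst χ X ψ)

open Classical in
/-- Deferral tracking `d_{Δ⇝Γ}`: the set of deferrals of Γ inherited from the deferral set d
of Δ along a rule application from Δ to the conclusion Γ, with the refocusing convention
`∅_{Δ⇝Γ} = dset Γ`. -/
noncomputable def trackSet [DecidableEq V] (Δ Γ : Set (Formula P A V))
    (d : Set (Formula P A V)) : Set (Formula P A V) :=
  if d = ∅ then dset Γ
  else if IsStateNode Δ then
    {δ ∈ dset Γ | ∃ θ, Formula.Eventuality θ ∧ Formula.IsDeferral δ θ ∧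
      ∃ a : A,
        (Formula.dia a δ ∈ d ∧ Formula.dia a δ ∈ Δ ∧
          Γ = {ψ | Formula.box a ψ ∈ Δ} ∪ {δ} ∧ Formula.IsDeferral (Formula.dia a δ) θ)
        ∨ (Formula.box a δ ∈ d ∧ Formula.box a δ ∈ Δ ∧
          (∃ φ₀, Formula.dia a φ₀ ∈ Δ ∧ Γ = {ψ | Formula.box a ψ ∈ Δ} ∪ {φ₀}) ∧
          Formula.IsDeferral (Formula.box a δ) θ)}
  else
    {δ₁ ∈ dset Γ | ∃ θ, Formula.Eventuality θ ∧ Formula.IsDeferral δ₁ θ ∧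
      ∃ δ₂ ∈ d, δ₂ ∈ Δ ∧ δ₁ ∈ Γ ∧ (∃ S ∈ conclP Δ, Γ ∈ S) ∧
        InheritsProp δ₁ δ₂ ∧ Formula.IsDeferral δ₂ θ}

/-- `CG G` = 𝐂_G: the focused nodes (Γ,d) with Γ ∈ G and d ⊆ Γ a set of deferrals. -/
def CG [DecidableEq V] (G : Set (Set (Formula P A V))) : Set (FNode P A V) :=
  {v | v.1 ∈ G ∧ v.2 ⊆ dset v.1}

/-- The focused nodes in C with empty focus. -/
def Fset (C : Set (FNode P A V)) : Set (FNode P A V) := {v ∈ C | v.2 = ∅}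

/-- The function f over base set C. -/
noncomputable def ftrans [DecidableEq V] (C Y : Set (FNode P A V)) : Set (FNode P A V) :=
  {v ∈ C | ∀ S ∈ concl v.1, ∃ Γ ∈ S, (Γ, trackSet v.1 Γ v.2) ∈ Y}

/-- The function g over base set C. -/
noncomputable def gtrans [DecidableEq V] (C Y : Set (FNode P A V)) : Set (FNode P A V) :=
  {v ∈ C | ∃ S ∈ concl v.1, ∀ Γ ∈ S, (Γ, trackSet v.1 Γ v.2) ∈ Y}

/-- The proof transitional f̂_X(Y) = (f(Y) ∩ F̄) ∪ (f(X) ∩ F). -/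
noncomputable def fhat [DecidableEq V] (C X Y : Set (FNode P A V)) : Set (FNode P A V) :=
  (ftrans C Y ∩ (C \ Fset C)) ∪ (ftrans C X ∩ Fset C)

/-- The proof transitional ĝ_X(Y) = g(X) ∪ (g(Y) ∩ F̄). -/
noncomputable def ghat [DecidableEq V] (C X Y : Set (FNode P A V)) : Set (FNode P A V) :=
  gtrans C X ∪ (gtrans C Y ∩ (C \ Fset C))

theorem ftrans_mono [DecidableEq V] (C : Set (FNode P A V)) :
    Monotone (ftrans C) := by
  intro Y Y' h v hv
  refine ⟨hv.1, fun S hS => ?_⟩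
  obtain ⟨Γ, hΓ, hm⟩ := hv.2 S hS
  exact ⟨Γ, hΓ, h hm⟩

theorem gtrans_mono [DecidableEq V] (C : Set (FNode P A V)) :
    Monotone (gtrans C) := by
  intro Y Y' h v hv
  obtain ⟨hv1, S, hS, hall⟩ := hv
  exact ⟨hv1, S, hS, fun Γ hΓ => h (hall Γ hΓ)⟩

theorem fhat_mono_left [DecidableEq V] (C : Set (FNode P A V)) {X X' : Set (FNode P A V)}
    (h : X ≤ X') (Y : Set (FNode P A V)) : fhat C X Y ⊆ fhat C X' Y := by
  intro v hv
  rcases hv with h1 | h2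
  · exact Or.inl h1
  · exact Or.inr ⟨ftrans_mono C h h2.1, h2.2⟩

theorem fhat_mono_right [DecidableEq V] (C X : Set (FNode P A V)) :
    Monotone (fhat C X) := by
  intro Y Y' h v hv
  rcases hv with h1 | h2
  · exact Or.inl ⟨ftrans_mono C h h1.1, h1.2⟩
  · exact Or.inr h2

theorem ghat_mono_left [DecidableEq V] (C : Set (FNode P A V)) {X X' : Set (FNode P A V)}
    (h : X ≤ X') (Y : Set (FNode P A V)) : ghat C X Y ⊆ ghat C X' Y := by
  intro v hv
  rcases hv with h1 | h2
  · exact Or.inl (gtrans_mono C h h1)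
  · exact Or.inr h2

theorem ghat_mono_right [DecidableEq V] (C X : Set (FNode P A V)) :
    Monotone (ghat C X) := by
  intro Y Y' h v hv
  rcases hv with h1 | h2
  · exact Or.inl h1
  · exact Or.inr ⟨gtrans_mono C h h2.1, h2.2⟩

/-- The inner map Y ↦ f̂_X(Y) as an order homomorphism. -/
noncomputable def fhatHom [DecidableEq V] (C X : Set (FNode P A V)) :
    Set (FNode P A V) →o Set (FNode P A V) :=
  ⟨fun Y => fhat C X Y, fhat_mono_right C X⟩

/-- The inner map Y ↦ ĝ_X(Y) as an order homomorphism. -/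
noncomputable def ghatHom [DecidableEq V] (C X : Set (FNode P A V)) :
    Set (FNode P A V) →o Set (FNode P A V) :=
  ⟨fun Y => ghat C X Y, ghat_mono_right C X⟩

/-- The outer map X ↦ μY.f̂_X(Y) as an order homomorphism. -/
noncomputable def EGmap [DecidableEq V] (C : Set (FNode P A V)) :
    Set (FNode P A V) →o Set (FNode P A V) :=
  ⟨fun X => OrderHom.lfp (fhatHom C X), by
    intro X X' h
    exact OrderHom.lfp.monotone (fun Y => fhat_mono_left C h Y)⟩

/-- The outer map X ↦ νY.ĝ_X(Y) as an order homomorphism. -/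
noncomputable def AGmap [DecidableEq V] (C : Set (FNode P A V)) :
    Set (FNode P A V) →o Set (FNode P A V) :=
  ⟨fun X => OrderHom.gfp (ghatHom C X), by
    intro X X' h
    exact OrderHom.gfp.monotone (fun Y => ghat_mono_left C h Y)⟩

/-- The successful focused nodes: E_G = νX.μY.f̂_X(Y), computed in 𝒫(𝐂_G). -/
noncomputable def EG [DecidableEq V] (G : Set (Set (Formula P A V))) : Set (FNode P A V) :=
  OrderHom.gfp (EGmap (CG G))

/-- The unsuccessful focused nodes: A_G = μX.νY.ĝ_X(Y), computed in 𝒫(𝐂_G). -/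
noncomputable def AG [DecidableEq V] (G : Set (Set (Formula P A V))) : Set (FNode P A V) :=
  OrderHom.lfp (AGmap (CG G))

/-- The Fischer–Ladner closure of φ₀, as a predicate. -/
inductive FL [DecidableEq V] (φ₀ : Formula P A V) : Formula P A V → Prop where
  | base : FL φ₀ φ₀
  | andL {a b} : FL φ₀ (Formula.and a b) → FL φ₀ a
  | andR {a b} : FL φ₀ (Formula.and a b) → FL φ₀ b
  | orL {a b} : FL φ₀ (Formula.or a b) → FL φ₀ a
  | orR {a b} : FL φ₀ (Formula.or a b) → FL φ₀ b
  | dia {c a} : FL φ₀ (Formula.dia c a) → FL φ₀ a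
  | box {c a} : FL φ₀ (Formula.box c a) → FL φ₀ a
  | mu {X a} : FL φ₀ (Formula.mu X a) → FL φ₀ (Formula.subst a X (Formula.mu X a))
  | nu {X a} : FL φ₀ (Formula.nu X a) → FL φ₀ (Formula.subst a X (Formula.nu X a))

/-- The set of nodes generated from Γ₀ by exhaustive application of the tableau rules. -/
inductive Reach [DecidableEq V] (Γ₀ : Set (Formula P A V)) : Set (Formula P A V) → Prop where
  | base : Reach Γ₀ Γ₀
  | step {Δ : Set (Formula P A V)} {S : Set (Set (Formula P A V))} {Γ : Set (Formula P A V)} :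
      Reach Γ₀ Δ → S ∈ concl Δ → Γ ∈ S → Reach Γ₀ Γ

/-! ## Propositional entailment and timed-out tableaux -/

/-- Propositional satisfaction under a valuation of atoms (modal literals and propositional
atoms are treated as atoms, fixpoint literals are unfolded). -/
inductive PSat [DecidableEq V] (v : Formula P A V → Prop) : Formula P A V → Prop where
  | top : PSat v Formula.top
  | prop {p} : v (Formula.prop p) → PSat v (Formula.prop p)
  | nprop {p} : ¬ v (Formula.prop p) → PSat v (Formula.nprop p)
  | var {X} : v (Formula.var X) → PSat v (Formula.var X)
  | and {a b} : PSat v a → PSat v b → PSat v (Formula.and a b)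
  | orL {a b} : PSat v a → PSat v (Formula.or a b)
  | orR {a b} : PSat v b → PSat v (Formula.or a b)
  | dia {c a} : v (Formula.dia c a) → PSat v (Formula.dia c a)
  | box {c a} : v (Formula.box c a) → PSat v (Formula.box c a)
  | mu {X a} : PSat v (Formula.subst a X (Formula.mu X a)) → PSat v (Formula.mu X a)
  | nu {X a} : PSat v (Formula.subst a X (Formula.nu X a)) → PSat v (Formula.nu X a)

/-- Ψ ⊢_PL φ: ⋀Ψ → φ is a propositional tautology (modal literals treated as atoms,
fixpoint literals unfolded). -/
def PLEntails [DecidableEq V] (Ψ : Set (Formula P A V)) (φ : Formula P A V) : Prop :=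
  ∀ v : Formula P A V → Prop, (∀ ψ ∈ Ψ, PSat v ψ) → PSat v φ

/-- Ψ ⊢_PL Φ for a set Φ: Ψ propositionally entails each element of Φ. -/
def PLEntailsAll [DecidableEq V] (Ψ Φ : Set (Formula P A V)) : Prop :=
  ∀ φ ∈ Φ, PLEntails Ψ φ

/-- d' ⊢_Γ δ: d' is sufficient for the deferral δ at Γ, i.e. d' ∪ N(Γ,θ) ⊢_PL δ where
θ is the eventuality δ belongs to and N(Γ,θ) the formulas of Γ not belonging to θ. -/
def EntailsAt [DecidableEq V] (Γ d' : Set (Formula P A V)) (δ : Formula P A V) : Prop :=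
  ∃ θ, Formula.Eventuality θ ∧ Formula.IsDeferral δ θ ∧
    PLEntails (d' ∪ {φ ∈ Γ | ¬ Formula.IsDeferral φ θ}) δ

/-- d' ⊢_Γ d for a set d of deferrals. -/
def EntailsAtSet [DecidableEq V] (Γ d' d : Set (Formula P A V)) : Prop :=
  ∀ δ ∈ d, EntailsAt Γ d' δ

open Classical in
/-- The time-out sets to(d,m) over U with successor relation L. -/
noncomputable def toSet [DecidableEq V] (U : Set (FNode P A V))
    (L : FNode P A V → FNode P A V → Prop) :
    Nat → Set (Formula P A V) → Set (FNode P A V)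
  | 0, d => if d = ∅ then U else ∅
  | m + 1, d =>
    if d = ∅ then U
    else
      {w | w ∈ U ∧ ∀ S ∈ concl w.1, ∃ v, L w v ∧ ∃ Γ ∈ S,
        PLEntailsAll v.1 Γ ∧
        EntailsAtSet v.1 v.2 (trackSet w.1 Γ w.2) ∧
        ∃ d'' , d'' ⊆ dset v.1 ∧ EntailsAtSet v.1 d'' (trackSet w.1 Γ d) ∧
          v ∈ toSet U L m d''}

/-- L is a timed-out tableau over U: L ⊆ U × U and each focused node (Γ,d) ∈ U is in
to(d(Γ),m) for some m. -/
def TimedOutTableau [DecidableEq V] (U : Set (FNode P A V))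
    (L : FNode P A V → FNode P A V → Prop) : Prop :=
  (∀ v w, L v w → v ∈ U ∧ w ∈ U) ∧ ∀ w ∈ U, ∃ m, w ∈ toSet U L m (dset w.1)

/-! ## Auxiliary material for the complementation theorem -/

section Complementation

variable {P A V : Type} [DecidableEq V]

lemma gtrans_subset' (C Y : Set (FNode P A V)) : gtrans C Y ⊆ C := fun _ hv => hv.1

lemma fhat_subset' (C X Y : Set (FNode P A V)) : fhat C X Y ⊆ C := by
  rintro v (h | h)
  · exact h.1.1
  · exact h.1.1

lemma trackSet_subset_dset (Δ Γ : Set (Formula P A V)) (d : Set (Formula P A V)) :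
    trackSet Δ Γ d ⊆ dset Γ := by
  unfold trackSet
  split
  · exact fun δ hδ => hδ
  · split
    · exact fun δ hδ => hδ.1
    · exact fun δ hδ => hδ.1

lemma track_mem {G : Set (Set (Formula P A V))} (hG : FullyExpanded G)
    {v : FNode P A V} (hv : v.1 ∈ G) {S : Set (Set (Formula P A V))}
    {Γ : Set (Formula P A V)} (hS : S ∈ concl v.1) (hΓ : Γ ∈ S)
    (d : Set (Formula P A V)) : ((Γ, trackSet v.1 Γ d) : FNode P A V) ∈ CG G :=
  ⟨hG v.1 hv S hS Γ hΓ, trackSet_subset_dset v.1 Γ d⟩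

lemma ftrans_diff_iff {G : Set (Set (Formula P A V))} (hG : FullyExpanded G)
    {v : FNode P A V} (hv : v ∈ CG G) (X : Set (FNode P A V)) :
    v ∈ ftrans (CG G) (CG G \ X) ↔ v ∉ gtrans (CG G) X := by
  constructor
  · rintro ⟨-, hall⟩ ⟨-, S, hS, hg⟩
    obtain ⟨Γ, hΓ, ht⟩ := hall S hS
    exact ht.2 (hg Γ hΓ)
  · intro hng
    refine ⟨hv, fun S hS => ?_⟩
    by_contra hno
    push_neg at hno
    refine hng ⟨hv, S, hS, fun Γ hΓ => ?_⟩
    by_contra hx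
    exact hno Γ hΓ ⟨track_mem hG hv.1 hS hΓ _, hx⟩

/-- The dual inner operator h(X,Y) = (g(X) ∩ F) ∪ (g(Y) ∩ F̄). -/
noncomputable def hhat (C X Y : Set (FNode P A V)) : Set (FNode P A V) :=
  (gtrans C X ∩ Fset C) ∪ (gtrans C Y ∩ (C \ Fset C))

lemma hhat_subset (C X Y : Set (FNode P A V)) : hhat C X Y ⊆ C := by
  rintro v (h | h)
  · exact h.1.1
  · exact h.1.1

lemma hhat_mono_left (C : Set (FNode P A V)) {X X' : Set (FNode P A V)}
    (h : X ≤ X') (Y : Set (FNode P A V)) : hhat C X Y ⊆ hhat C X' Y := by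
  rintro v (h1 | h2)
  · exact Or.inl ⟨gtrans_mono C h h1.1, h1.2⟩
  · exact Or.inr h2

lemma hhat_mono_right (C X : Set (FNode P A V)) : Monotone (hhat C X) := by
  intro Y Y' h v hv
  rcases hv with h1 | h2
  · exact Or.inl h1
  · exact Or.inr ⟨gtrans_mono C h h2.1, h2.2⟩

lemma hhat_le_ghat (C X Y : Set (FNode P A V)) : hhat C X Y ⊆ ghat C X Y := by
  rintro v (h1 | h2)
  · exact Or.inl h1.1
  · exact Or.inr h2

/-- The inner map Y ↦ h_X(Y) as an order homomorphism. -/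
noncomputable def hhatHom (C X : Set (FNode P A V)) :
    Set (FNode P A V) →o Set (FNode P A V) :=
  ⟨fun Y => hhat C X Y, hhat_mono_right C X⟩

/-- The outer map X ↦ νY.h_X(Y) as an order homomorphism. -/
noncomputable def PsiHom (C : Set (FNode P A V)) :
    Set (FNode P A V) →o Set (FNode P A V) :=
  ⟨fun X => OrderHom.gfp (hhatHom C X), by
    intro X X' h
    exact OrderHom.gfp.monotone (fun Y => hhat_mono_left C h Y)⟩

/-- Pointwise duality between h and f̂ over 𝐂_G, for G fully expanded. -/
lemma hhat_eq_compl_fhat {G : Set (Set (Formula P A V))} (hG : FullyExpanded G)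
    (X Y : Set (FNode P A V)) :
    hhat (CG G) X Y = CG G \ fhat (CG G) (CG G \ X) (CG G \ Y) := by
  ext v
  by_cases hvC : v ∈ CG G
  · have hX := ftrans_diff_iff hG hvC X
    have hY := ftrans_diff_iff hG hvC Y
    simp only [hhat, fhat, Set.mem_union, Set.mem_inter_iff, Set.mem_diff]
    by_cases hvF : v ∈ Fset (CG G) <;> tauto
  · have h1 : v ∉ gtrans (CG G) X := fun h => hvC h.1
    have h2 : v ∉ gtrans (CG G) Y := fun h => hvC h.1
    simp only [hhat, fhat, Set.mem_union, Set.mem_inter_iff, Set.mem_diff]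
    tauto

/-- Relative complementation of fixed points: if Gm(x) = C ∖ F(C ∖ x) on subsets of C,
then μGm = C ∖ νF. -/
lemma lfp_eq_compl_gfp {α : Type*} (C : Set α) (F Gm : Set α →o Set α)
    (hF : ∀ x, F x ⊆ C) (hGm : ∀ x, Gm x ⊆ C)
    (hFG : ∀ x, x ⊆ C → Gm x = C \ F (C \ x)) :
    OrderHom.lfp Gm = C \ OrderHom.gfp F := by
  have haC : OrderHom.gfp F ⊆ C := by
    conv_lhs => rw [← OrderHom.map_gfp F]
    exact hF _
  have hbC : OrderHom.lfp Gm ⊆ C := by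
    conv_lhs => rw [← OrderHom.map_lfp Gm]
    exact hGm _
  apply le_antisymm
  · apply OrderHom.lfp_le
    have h1 : Gm (C \ OrderHom.gfp F) = C \ OrderHom.gfp F := by
      rw [hFG _ Set.diff_subset, Set.diff_diff_cancel_left haC, OrderHom.map_gfp]
    exact h1.le
  · have h1 : Gm (OrderHom.lfp Gm) = C \ F (C \ OrderHom.lfp Gm) := hFG _ hbC
    rw [OrderHom.map_lfp] at h1
    have h2 : C \ OrderHom.lfp Gm = F (C \ OrderHom.lfp Gm) := by
      conv_lhs => rw [h1]
      rw [Set.diff_diff_cancel_left (hF _)]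
    have h3 : C \ OrderHom.lfp Gm ≤ OrderHom.gfp F := OrderHom.le_gfp _ h2.le
    intro v hv
    by_contra hvb
    exact hv.2 (h3 ⟨hv.1, hvb⟩)

/-- Dual version: νGm = C ∖ μF. -/
lemma gfp_eq_compl_lfp {α : Type*} (C : Set α) (F Gm : Set α →o Set α)
    (hF : ∀ x, F x ⊆ C) (hGm : ∀ x, Gm x ⊆ C)
    (hFG : ∀ x, x ⊆ C → Gm x = C \ F (C \ x)) :
    OrderHom.gfp Gm = C \ OrderHom.lfp F := by
  have hFG' : ∀ x, x ⊆ C → F x = C \ Gm (C \ x) := by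
    intro x hx
    rw [hFG _ Set.diff_subset, Set.diff_diff_cancel_left hx,
      Set.diff_diff_cancel_left (hF x)]
  have h := lfp_eq_compl_gfp C Gm F hGm hF hFG'
  have hg : OrderHom.gfp Gm ⊆ C := by
    conv_lhs => rw [← OrderHom.map_gfp Gm]
    exact hGm _
  rw [h, Set.diff_diff_cancel_left hg]

end Complementation

/-- If G is fully expanded, then E_G = 𝐂_G ∖ A_G. -/
theorem EG_complement_AG {P A V : Type} [DecidableEq V]
    (G : Set (Set (Formula P A V))) (hG : FullyExpanded G) :
    EG G = CG G \ AG G := by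
  set C := CG G with hC
  -- range facts
  have hEGmap_sub : ∀ X, EGmap C X ⊆ C := by
    intro X
    have : EGmap C X = fhat C X (EGmap C X) := (OrderHom.map_lfp (fhatHom C X)).symm
    rw [this]
    exact fhat_subset' C X _
  have hPsi_sub : ∀ X, PsiHom C X ⊆ C := by
    intro X
    have : PsiHom C X = hhat C X (PsiHom C X) := (OrderHom.map_gfp (hhatHom C X)).symm
    rw [this]
    exact hhat_subset C X _
  have hAGmap_sub : ∀ X, AGmap C X ⊆ C := by
    intro X
    have : AGmap C X = ghat C X (AGmap C X) := (OrderHom.map_gfp (ghatHom C X)).symm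
    rw [this]
    rintro v (h | h)
    · exact h.1
    · exact h.1.1
  -- outer duality identity
  have houter : ∀ X, X ⊆ C → PsiHom C X = C \ EGmap C (C \ X) := by
    intro X hX
    exact gfp_eq_compl_lfp C (fhatHom C (C \ X)) (hhatHom C X)
      (fun Y => fhat_subset' C _ Y) (fun Y => hhat_subset C X Y)
      (fun Y _ => hhat_eq_compl_fhat hG X Y)
  -- lfp Psi = C \ EG
  have hdual : OrderHom.lfp (PsiHom C) = C \ EG G := by
    exact lfp_eq_compl_gfp C (EGmap C) (PsiHom C) hEGmap_sub hPsi_sub houter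
  -- AG = lfp Psi
  have hPsi_le_ghat : ∀ X, PsiHom C X ⊆ AGmap C X := by
    intro X
    exact OrderHom.gfp.monotone (fun Y => hhat_le_ghat C X Y)
  have hAG : AG G = OrderHom.lfp (PsiHom C) := by
    apply le_antisymm
    · apply OrderHom.lfp_le
      set A' := OrderHom.lfp (PsiHom C) with hA'
      -- A' is a fixed point of Psi
      have hA'fix : PsiHom C A' = A' := OrderHom.map_lfp (PsiHom C)
      -- A' ⊆ gfp (ghatHom C A')
      have hA'le : A' ≤ OrderHom.gfp (ghatHom C A') := by
        conv_lhs => rw [← hA'fix]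
        exact hPsi_le_ghat A'
      -- gfp (ghatHom C A') is a postfixpoint of hhatHom C A'
      have hpost : OrderHom.gfp (ghatHom C A') ≤
          hhat C A' (OrderHom.gfp (ghatHom C A')) := by
        set Y := OrderHom.gfp (ghatHom C A') with hY
        have hfix : ghat C A' Y = Y := OrderHom.map_gfp (ghatHom C A')
        intro v hv
        rw [← hfix] at hv
        rcases hv with h1 | h2
        · -- v ∈ gtrans C A'
          by_cases hvF : v ∈ Fset C
          · exact Or.inl ⟨h1, hvF⟩
          · exact Or.inr ⟨gtrans_mono C hA'le h1, h1.1, hvF⟩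
        · exact Or.inr h2
      have : OrderHom.gfp (ghatHom C A') ≤ OrderHom.gfp (hhatHom C A') :=
        OrderHom.le_gfp _ hpost
      calc AGmap C A' = OrderHom.gfp (ghatHom C A') := rfl
        _ ≤ OrderHom.gfp (hhatHom C A') := this
        _ = PsiHom C A' := rfl
        _ = A' := hA'fix
    · apply OrderHom.lfp_le
      have : PsiHom C (AG G) ≤ AGmap C (AG G) := hPsi_le_ghat (AG G)
      calc PsiHom C (AG G) ≤ AGmap C (AG G) := this
        _ = AG G := OrderHom.map_lfp (AGmap C)
  -- conclude
  have hEGsub : EG G ⊆ C := by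
    have : EG G = EGmap C (EG G) := (OrderHom.map_gfp (EGmap C)).symm
    rw [this]
    exact hEGmap_sub _
  rw [hAG, hdual, Set.diff_diff_cancel_left hEGsub]
end

section
/- Let G be the fully expanded set of nodes generated from Γ0 = {φ0} by exhaustive application of the tableau rules, and let G_p ⊆ G be any set of nodes with Γ0 ∈ G_p. If (Γ0, d(Γ0)) ∈ E_G, then (Γ0, d(Γ0)) ∉ A_{G_p}. (Consequently, if some run of the global caching algorithm without intermediate propagation is successful on input φ0, then all runs on input φ0 are successful.) -/
set_option linter.unusedVariables false

variable {P A V W : Type}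

variable {P A V : Type}

open Formula

section Aux

variable {P A V : Type} [DecidableEq V]

/-- Combining an f-witness and a g-witness yields a common successor. -/
lemma combine_fg {C Y Y' : Set (FNode P A V)} {v : FNode P A V}
    (hf : v ∈ ftrans C Y) (hg : v ∈ gtrans C Y') :
    ∃ w, w ∈ Y ∧ w ∈ Y' := by
  obtain ⟨hv, hF⟩ := hf
  obtain ⟨-, S, hS, hG⟩ := hg
  obtain ⟨Γ, hΓ, hY⟩ := hF S hS
  exact ⟨_, hY, hG Γ hΓ⟩

lemma gtrans_mono_base {C C' Y : Set (FNode P A V)} (h : C ⊆ C') :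
    gtrans C Y ⊆ gtrans C' Y := by
  rintro v ⟨hv, rest⟩
  exact ⟨h hv, rest⟩

lemma ghat_mono_base {C C' X Y : Set (FNode P A V)} (h : C ⊆ C') :
    ghat C X Y ⊆ ghat C' X Y := by
  rintro v (hv | ⟨hv, hvC, hvF⟩)
  · exact Or.inl (gtrans_mono_base h hv)
  · refine Or.inr ⟨gtrans_mono_base h hv, h hvC, fun hF => hvF ⟨hvC, hF.2⟩⟩

lemma CG_mono {Gp G : Set (Set (Formula P A V))} (h : Gp ⊆ G) :
    CG Gp ⊆ CG G := fun v hv => ⟨h hv.1, hv.2⟩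

/-- A is monotone in the set of nodes. -/
lemma AG_mono {Gp G : Set (Set (Formula P A V))} (h : Gp ⊆ G) :
    AG Gp ⊆ AG G := by
  have hC : CG Gp ⊆ CG G := CG_mono h
  have hgfp : ∀ X : Set (FNode P A V),
      AGmap (CG Gp) X ≤ AGmap (CG G) X := by
    intro X
    show OrderHom.gfp (ghatHom (CG Gp) X) ≤ OrderHom.gfp (ghatHom (CG G) X)
    apply OrderHom.le_gfp
    calc OrderHom.gfp (ghatHom (CG Gp) X)
        = ghat (CG Gp) X (OrderHom.gfp (ghatHom (CG Gp) X)) :=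
          (OrderHom.map_gfp (ghatHom (CG Gp) X)).symm
      _ ≤ ghat (CG G) X (OrderHom.gfp (ghatHom (CG Gp) X)) := ghat_mono_base hC
  show OrderHom.lfp (AGmap (CG Gp)) ≤ OrderHom.lfp (AGmap (CG G))
  apply OrderHom.lfp_le
  calc AGmap (CG Gp) (OrderHom.lfp (AGmap (CG G)))
      ≤ AGmap (CG G) (OrderHom.lfp (AGmap (CG G))) := hgfp _
    _ = OrderHom.lfp (AGmap (CG G)) := OrderHom.map_lfp (AGmap (CG G))

/-- E_G is a fixpoint of f̂ in both arguments. -/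
lemma EG_fix (G : Set (Set (Formula P A V))) :
    fhat (CG G) (EG G) (EG G) = EG G := by
  have h1 : EGmap (CG G) (OrderHom.gfp (EGmap (CG G))) = OrderHom.gfp (EGmap (CG G)) :=
    OrderHom.map_gfp (EGmap (CG G))
  have h1' : OrderHom.lfp (fhatHom (CG G) (EG G)) = EG G := h1
  have h2 : fhat (CG G) (EG G) (OrderHom.lfp (fhatHom (CG G) (EG G)))
      = OrderHom.lfp (fhatHom (CG G) (EG G)) := OrderHom.map_lfp (fhatHom (CG G) (EG G))
  rw [h1'] at h2
  exact h2

/-- The main disjointness: E_G and A_G are disjoint. -/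
lemma EG_disjoint_AG (G : Set (Set (Formula P A V))) {v : FNode P A V}
    (hE : v ∈ EG G) (hA : v ∈ AG G) : False := by
  set C := CG G with hC
  set E := EG G with hEdef
  set Z := OrderHom.gfp (ghatHom C Eᶜ) with hZdef
  have hfixE : fhat C E E = E := EG_fix G
  have hfixZ : ghat C Eᶜ Z = Z := OrderHom.map_gfp (ghatHom C Eᶜ)
  -- Key: E ⊆ Zᶜ ∩ E by strong lfp induction on E = μY.f̂_E(Y)
  have hsub : fhat C E (Zᶜ ∩ E) ⊆ Zᶜ ∩ E := by
    intro w hw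
    refine ⟨?_, ?_⟩
    · -- w ∉ Z
      intro hwZ
      rw [← hfixZ] at hwZ
      rcases hw with ⟨hf, hwC, hwF⟩ | ⟨hf, hwFs⟩
      · rcases hwZ with hg | ⟨hg, _⟩
        · obtain ⟨u, ⟨huZc, huE⟩, huEc⟩ := combine_fg hf hg
          exact huEc huE
        · obtain ⟨u, ⟨huZc, huE⟩, huZ⟩ := combine_fg hf hg
          exact huZc huZ
      · rcases hwZ with hg | ⟨hg, hwC, hwF⟩
        · obtain ⟨u, huE, huEc⟩ := combine_fg hf hg
          exact huEc huE
        · exact hwF hwFs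
    · -- w ∈ E
      have : fhat C E (Zᶜ ∩ E) ⊆ fhat C E E :=
        fhat_mono_right C E (fun u hu => hu.2)
      rw [hfixE] at this
      exact this hw
  have hEZ : E ⊆ Zᶜ ∩ E := by
    have h1 : OrderHom.lfp (fhatHom C E) = E :=
      OrderHom.map_gfp (EGmap C)
    calc E = OrderHom.lfp (fhatHom C E) := h1.symm
      _ ≤ Zᶜ ∩ E := OrderHom.lfp_le (fhatHom C E) hsub
  -- Hence A_G ⊆ Eᶜ
  have hAE : AG G ⊆ Eᶜ := by
    show OrderHom.lfp (AGmap C) ≤ Eᶜ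
    apply OrderHom.lfp_le
    show OrderHom.gfp (ghatHom C Eᶜ) ≤ Eᶜ
    intro u huZ huE
    exact (hEZ huE).1 huZ
  exact hAE hA hE

end Aux

/-- If G is the fully expanded set of nodes generated from Γ₀ = {φ₀} and
G_p ⊆ G contains Γ₀, then (Γ₀, d(Γ₀)) ∈ E_G implies (Γ₀, d(Γ₀)) ∉ A_{G_p}. -/
theorem successful_run_implies_all_successful {P A V : Type} [DecidableEq V]
    (φ₀ : Formula P A V)
    (hclean : Formula.Clean φ₀) (hirr : Formula.Irredundant φ₀)
    (hg : Formula.Guarded φ₀) (hcl : Formula.Closed φ₀)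
    (haf : Formula.AlternationFree φ₀)
    (Gp : Set (Set (Formula P A V)))
    (hGp : Gp ⊆ {Γ | Reach ({φ₀} : Set (Formula P A V)) Γ})
    (hmem : ({φ₀} : Set (Formula P A V)) ∈ Gp)
    (hE : (({φ₀} : Set (Formula P A V)), dset ({φ₀} : Set (Formula P A V)))
        ∈ EG {Γ | Reach ({φ₀} : Set (Formula P A V)) Γ}) :
    (({φ₀} : Set (Formula P A V)), dset ({φ₀} : Set (Formula P A V))) ∉ AG Gp := by
  intro hA
  exact EG_disjoint_AG {Γ | Reach ({φ₀} : Set (Formula P A V)) Γ} hE (AG_mono hGp hA)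
end
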